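/- Let (X,μ) be a non-atomic probability measure space, T a tree on X, M_T the associated maximal operator, p > 1 and k = p/(p−1). If φ : X → [0,∞) is measurable with ||φ||_{p,∞} ≤ F, then for every λ > 0, μ({x ∈ X : M_T φ(x) ≥ λ}) ≤ k^p F^p/λ^p. -/

import Mathlib

/-!
Stopping at the maximal sets of `T` on which the average of `|φ|` exceeds `t` covers
`{M_T φ > t}` by an almost disjoint family whose union `S` satisfies `t μ(S) ≤ ∫_S |φ|`.
The layer-cake formula, with the trivial bound `μ(E)` for the tail below the level
`t₀ = F μ(E)^{-1/p}` and the weak-type bound `(F/t)^p` above it, gives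
`∫_E |φ| ≤ k F μ(E)^{1-1/p}` for every `E`, i.e. `|||φ|||_{p,∞} ≤ k ‖φ‖_{p,∞}`.
Together they give `t μ(S)^{1/p} ≤ k F`, so `‖M_T φ‖_{p,∞} ≤ k F`.
-/

open MeasureTheory Set Filter ENNReal

/-- A measure is non-atomic if every measurable set of positive measure contains a
measurable subset of strictly smaller positive measure. -/
def Nonatomic {X : Type*} [MeasurableSpace X] (μ : Measure X) : Prop :=
  ∀ A : Set X, MeasurableSet A → 0 < μ A →
    ∃ B, B ⊆ A ∧ MeasurableSet B ∧ 0 < μ B ∧ μ B < μ A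

/-- A tree on a probability measure space, in the sense of Melas. -/
structure TreeOn (X : Type*) [MeasurableSpace X] (μ : MeasureTheory.Measure X) where
  carrier : Set (Set X)
  child : Set X → Set (Set X)
  level : ℕ → Set (Set X)
  univ_mem : Set.univ ∈ carrier
  meas : ∀ I ∈ carrier, MeasurableSet I
  pos : ∀ I ∈ carrier, 0 < μ I
  child_subset_carrier : ∀ I ∈ carrier, child I ⊆ carrier
  child_finite : ∀ I ∈ carrier, (child I).Finite
  child_two : ∀ I ∈ carrier, ∃ J ∈ child I, ∃ K ∈ child I, J ≠ K
  child_sub : ∀ I ∈ carrier, ∀ J ∈ child I, J ⊆ I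
  child_almost_disjoint : ∀ I ∈ carrier, ∀ J ∈ child I, ∀ K ∈ child I, J ≠ K → μ (J ∩ K) = 0
  child_union : ∀ I ∈ carrier, ⋃₀ child I = I
  level_zero : level 0 = {Set.univ}
  level_succ : ∀ m, level (m + 1) = ⋃ I ∈ level m, child I
  carrier_eq : carrier = ⋃ m, level m
  level_tendsto : Filter.Tendsto (fun m => ⨆ I ∈ level m, μ I) Filter.atTop (nhds 0)

/-- The maximal operator associated to a tree `T`:
`M_T φ (x) = sup { (1/μ I) ∫_I |φ| dμ : x ∈ I, I ∈ T }`. -/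
noncomputable def maxT {X : Type*} [MeasurableSpace X] (μ : MeasureTheory.Measure X)
    (T : TreeOn X μ) (φ : X → ℝ) (x : X) : ℝ≥0∞ :=
  ⨆ (I : Set X) (_ : I ∈ T.carrier) (_ : x ∈ I),
    (∫⁻ y in I, ENNReal.ofReal |φ y| ∂μ) / μ I

/-- The norm `|||φ|||_{p,∞} = sup { μ(E)^{-1+1/p} ∫_E |φ| dμ : E measurable, μ E > 0 }`. -/
noncomputable def tripleNorm {X : Type*} [MeasurableSpace X] (μ : MeasureTheory.Measure X)
    (p : ℝ) (φ : X → ℝ) : ℝ≥0∞ :=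
  ⨆ (E : Set X) (_ : MeasurableSet E) (_ : 0 < μ E),
    μ E ^ (-1 + 1/p) * ∫⁻ x in E, ENNReal.ofReal |φ x| ∂μ

/-- The standard quasi-norm `‖φ‖_{p,∞} = sup { λ · μ({|φ| > λ})^{1/p} : λ > 0 }`. -/
noncomputable def weakNorm {X : Type*} [MeasurableSpace X] (μ : MeasureTheory.Measure X)
    (p : ℝ) (φ : X → ℝ) : ℝ≥0∞ :=
  ⨆ (l : ℝ) (_ : 0 < l), ENNReal.ofReal l * μ {x | l < |φ x|} ^ (1/p)

/-- The standard quasi-norm for an `ℝ≥0∞`-valued function (such as `maxT μ T φ`). -/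
noncomputable def weakNormE {X : Type*} [MeasurableSpace X] (μ : MeasureTheory.Measure X)
    (p : ℝ) (g : X → ℝ≥0∞) : ℝ≥0∞ :=
  ⨆ (l : ℝ) (_ : 0 < l), ENNReal.ofReal l * μ {x | ENNReal.ofReal l < g x} ^ (1/p)

lemma ENNReal.le_div_rpow_of_mul_rpow_le {x a c : ℝ≥0∞} {p : ℝ} (hp : 0 < p) (ha₀ : a ≠ 0)
    (ha : a ≠ ∞) (h : a * x ^ (1 / p) ≤ c) : x ≤ (c / a) ^ p := by
  have hx : x ^ (1 / p) ≤ c / a := by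
    rwa [ENNReal.le_div_iff_mul_le (Or.inl ha₀) (Or.inl ha), mul_comm]
  rwa [one_div, ENNReal.rpow_inv_le_iff hp] at hx

lemma ENNReal.mul_rpow_one_div_le_of_mul_le {x c d : ℝ≥0∞} {p : ℝ} (hp : 0 < p) (hx : x ≠ ∞)
    (h : c * x ≤ d * x ^ (1 - 1 / p)) : c * x ^ (1 / p) ≤ d := by
  obtain rfl | hx₀ := eq_or_ne x 0
  · rw [ENNReal.zero_rpow_of_pos (one_div_pos.2 hp), mul_zero]
    exact zero_le
  have hy₀ : x ^ (1 - 1 / p) ≠ 0 := (ENNReal.rpow_pos (pos_iff_ne_zero.2 hx₀) hx).ne'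
  have hy : x ^ (1 - 1 / p) ≠ ∞ := by simp [ENNReal.rpow_eq_top_iff, hx₀, hx]
  rwa [← ENNReal.mul_le_mul_iff_left hy₀ hy, mul_assoc, ← ENNReal.rpow_add _ _ hx₀ hx,
    add_sub_cancel, ENNReal.rpow_one]

lemma lintegral_Ioi_ofReal_div_rpow {p F t₀ : ℝ} (hp : 1 < p) (hF : 0 ≤ F) (ht₀ : 0 < t₀) :
    ∫⁻ t in Ioi t₀, ENNReal.ofReal (F / t) ^ p =
      ENNReal.ofReal (F ^ p * t₀ ^ (1 - p) / (p - 1)) := by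
  have hint : IntegrableOn (fun t : ℝ => F ^ p * t ^ (-p)) (Ioi t₀) :=
    (integrableOn_Ioi_rpow_of_lt (by linarith) ht₀).const_mul _
  calc ∫⁻ t in Ioi t₀, ENNReal.ofReal (F / t) ^ p
      = ∫⁻ t in Ioi t₀, ENNReal.ofReal (F ^ p * t ^ (-p)) := by
        refine setLIntegral_congr_fun measurableSet_Ioi fun t ht => ?_
        have ht : 0 < t := ht₀.trans ht
        rw [ENNReal.ofReal_rpow_of_nonneg (div_nonneg hF ht.le) (by linarith),
          Real.div_rpow hF ht.le, Real.rpow_neg ht.le, div_eq_mul_inv]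
    _ = ENNReal.ofReal (∫ t in Ioi t₀, F ^ p * t ^ (-p)) := by
        rw [ofReal_integral_eq_lintegral_ofReal hint]
        filter_upwards [ae_restrict_mem measurableSet_Ioi] with t ht
        exact mul_nonneg (Real.rpow_nonneg hF _) (Real.rpow_nonneg (ht₀.trans ht).le _)
    _ = ENNReal.ofReal (F ^ p * t₀ ^ (1 - p) / (p - 1)) := by
        rw [integral_const_mul, integral_Ioi_rpow_of_lt (by linarith) ht₀,
          show -p + 1 = 1 - p by ring, neg_div, ← div_neg, neg_sub, mul_div_assoc]

lemma mul_add_rpow_div_eq_of_eq_mul_rpow {a F p t₀ : ℝ} (ha : 0 < a) (hF : 0 < F) (hp : 1 < p)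
    (ht₀ : t₀ = F * a ^ (-(1 / p))) :
    a * t₀ + F ^ p * t₀ ^ (1 - p) / (p - 1) = p / (p - 1) * F * a ^ (1 - 1 / p) := by
  have h₁ : a * t₀ = F * a ^ (1 - 1 / p) := by
    rw [ht₀, mul_left_comm, sub_eq_add_neg, Real.rpow_add ha, Real.rpow_one]
  have h₂ : F ^ p * t₀ ^ (1 - p) = F * a ^ (1 - 1 / p) := by
    rw [ht₀, Real.mul_rpow hF.le (by positivity), ← Real.rpow_mul ha.le, ← mul_assoc,
      ← Real.rpow_add hF, add_sub_cancel, Real.rpow_one]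
    congr 2
    field_simp
    ring
  have hp₁ : p - 1 ≠ 0 := by linarith
  rw [h₁, h₂]
  field_simp
  ring

section

variable {X : Type*} [MeasurableSpace X] {μ : Measure X}

lemma measure_lt_abs_le_of_weakNorm_le {p F t : ℝ} {φ : X → ℝ} (hp : 0 < p)
    (h : weakNorm μ p φ ≤ ENNReal.ofReal F) (ht : 0 < t) :
    μ {x | t < |φ x|} ≤ ENNReal.ofReal (F / t) ^ p := by
  rw [ENNReal.ofReal_div_of_pos ht]
  refine ENNReal.le_div_rpow_of_mul_rpow_le hp (ENNReal.ofReal_pos.2 ht).ne'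
    ENNReal.ofReal_ne_top (le_trans ?_ h)
  exact le_iSup₂ (f := fun l (_ : 0 < l) => ENNReal.ofReal l * μ {x | l < |φ x|} ^ (1 / p)) t ht

lemma mul_measure_setOf_le_rpow_le_of_weakNormE_le {p l : ℝ} {g : X → ℝ≥0∞} {c : ℝ≥0∞}
    (hp : 0 ≤ p) (h : weakNormE μ p g ≤ c) (hl : 0 < l) :
    ENNReal.ofReal l * μ {x | ENNReal.ofReal l ≤ g x} ^ (1 / p) ≤ c := by
  refine ENNReal.le_of_forall_lt_one_mul_le fun a ha => ?_
  obtain rfl | ha₀ := eq_or_ne a 0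
  · simp
  have ht : 0 < a.toReal * l := mul_pos (ENNReal.toReal_pos ha₀ ha.ne_top) hl
  have htl : a.toReal * l < l :=
    mul_lt_of_lt_one_left hl (ENNReal.toReal_lt_of_lt_ofReal (by simpa using ha))
  calc a * (ENNReal.ofReal l * μ {x | ENNReal.ofReal l ≤ g x} ^ (1 / p))
      = ENNReal.ofReal (a.toReal * l) * μ {x | ENNReal.ofReal l ≤ g x} ^ (1 / p) := by
        rw [← mul_assoc, ENNReal.ofReal_mul ENNReal.toReal_nonneg, ENNReal.ofReal_toReal ha.ne_top]
    _ ≤ ENNReal.ofReal (a.toReal * l) * μ {x | ENNReal.ofReal (a.toReal * l) < g x} ^ (1 / p) := by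
        gcongr
        exact (ENNReal.ofReal_lt_ofReal_iff hl).2 htl
    _ ≤ c := le_trans (le_iSup₂ (f := fun t (_ : 0 < t) =>
        ENNReal.ofReal t * μ {x | ENNReal.ofReal t < g x} ^ (1 / p)) _ ht) h

lemma setLIntegral_le_of_measure_lt_le {f : X → ℝ} (hf₀ : 0 ≤ᵐ[μ] f) (hf : AEMeasurable f μ)
    {p F : ℝ} (hp : 1 < p) (htail : ∀ t > 0, μ {x | t < f x} ≤ ENNReal.ofReal (F / t) ^ p)
    {E : Set X} (hE : μ E ≠ ∞) :
    ∫⁻ x in E, ENNReal.ofReal (f x) ∂μ ≤ ENNReal.ofReal (p / (p - 1) * F) * μ E ^ (1 - 1 / p) := by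
  rw [lintegral_eq_lintegral_meas_lt _ (ae_restrict_of_ae hf₀) hf.restrict]
  have htailE : ∀ t > 0, μ.restrict E {x | t < f x} ≤ ENNReal.ofReal (F / t) ^ p :=
    fun t ht => (Measure.le_iff'.1 Measure.restrict_le_self _).trans (htail t ht)
  rcases le_or_gt F 0 with hF | hF
  · calc ∫⁻ t in Ioi 0, μ.restrict E {x | t < f x} ≤ ∫⁻ _ in Ioi (0 : ℝ), 0 := by
          refine setLIntegral_mono' measurableSet_Ioi fun t ht => (htailE t ht).trans_eq ?_
          rw [ENNReal.ofReal_of_nonpos (div_nonpos_of_nonpos_of_nonneg hF ht.le),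
            ENNReal.zero_rpow_of_pos (by linarith)]
      _ ≤ _ := by rw [lintegral_zero]; exact zero_le
  obtain hE₀ | hE₀ := eq_or_ne (μ E) 0
  · simp [Measure.restrict_eq_zero.2 hE₀]
  set a := (μ E).toReal
  have ha : 0 < a := ENNReal.toReal_pos hE₀ hE
  set t₀ := F * a ^ (-(1 / p)) with ht₀_def
  have ht₀ : 0 < t₀ := by positivity
  rw [← Ioc_union_Ioi_eq_Ioi ht₀.le, lintegral_union measurableSet_Ioi Ioc_disjoint_Ioi_same]
  calc (∫⁻ t in Ioc 0 t₀, μ.restrict E {x | t < f x}) + ∫⁻ t in Ioi t₀, μ.restrict E {x | t < f x}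
      ≤ (∫⁻ _ in Ioc 0 t₀, μ E) + ∫⁻ t in Ioi t₀, ENNReal.ofReal (F / t) ^ p := by
        refine add_le_add (lintegral_mono fun t => ?_)
          (setLIntegral_mono' measurableSet_Ioi fun t ht => htailE t (ht₀.trans ht))
        exact (measure_mono (subset_univ _)).trans_eq (Measure.restrict_apply_univ E)
    _ = ENNReal.ofReal (a * t₀) + ENNReal.ofReal (F ^ p * t₀ ^ (1 - p) / (p - 1)) := by
        rw [setLIntegral_const, Real.volume_Ioc, sub_zero,
          lintegral_Ioi_ofReal_div_rpow hp hF.le ht₀,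
          ← ENNReal.ofReal_toReal hE, ENNReal.ofReal_mul ha.le]
    _ = ENNReal.ofReal (p / (p - 1) * F * a ^ (1 - 1 / p)) := by
        rw [← ENNReal.ofReal_add (by positivity) (div_nonneg (by positivity) (by linarith)),
          mul_add_rpow_div_eq_of_eq_mul_rpow ha hF hp ht₀_def]
    _ = ENNReal.ofReal (p / (p - 1) * F) * μ E ^ (1 - 1 / p) := by
        rw [ENNReal.ofReal_mul (mul_nonneg (div_nonneg (by linarith) (by linarith)) hF.le),
          ← ENNReal.ofReal_rpow_of_pos ha, ENNReal.ofReal_toReal hE]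
end

namespace TreeOn

variable {X : Type*} [MeasurableSpace X] {μ : Measure X} (T : TreeOn X μ)

lemma level_subset_carrier (m : ℕ) : T.level m ⊆ T.carrier := by
  rw [T.carrier_eq]
  exact subset_iUnion T.level m

lemma mem_level_succ_iff {m : ℕ} {I : Set X} :
    I ∈ T.level (m + 1) ↔ ∃ A ∈ T.level m, I ∈ T.child A := by
  simp only [T.level_succ, mem_iUnion, exists_prop]

lemma level_finite (m : ℕ) : (T.level m).Finite := by
  induction m with
  | zero => simp [T.level_zero]
  | succ m ih =>
    rw [T.level_succ]
    exact ih.biUnion fun I hI => T.child_finite I (T.level_subset_carrier m hI)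

lemma carrier_countable : T.carrier.Countable := by
  rw [T.carrier_eq]
  exact countable_iUnion fun m => (T.level_finite m).countable

lemma pairwise_aedisjoint_level (m : ℕ) : (T.level m).Pairwise (AEDisjoint μ) := by
  induction m with
  | zero => simp [T.level_zero]
  | succ m ih =>
    rintro I hI J hJ hIJ
    obtain ⟨A, hA, hIA⟩ := T.mem_level_succ_iff.1 hI
    obtain ⟨B, hB, hJB⟩ := T.mem_level_succ_iff.1 hJ
    have hAc := T.level_subset_carrier m hA
    have hBc := T.level_subset_carrier m hB
    obtain rfl | hAB := eq_or_ne A B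
    · exact T.child_almost_disjoint A hAc I hIA J hJB hIJ
    · exact (ih hA hB hAB).mono (T.child_sub A hAc I hIA) (T.child_sub B hBc J hJB)

lemma exists_level_superset {j m : ℕ} (hjm : j ≤ m) {I : Set X} (hI : I ∈ T.level m) :
    ∃ A ∈ T.level j, I ⊆ A := by
  induction m, hjm using Nat.le_induction generalizing I with
  | base => exact ⟨I, hI, subset_rfl⟩
  | succ m _ ih =>
    obtain ⟨B, hB, hIB⟩ := T.mem_level_succ_iff.1 hI
    obtain ⟨A, hA, hBA⟩ := ih hB
    exact ⟨A, hA, (T.child_sub B (T.level_subset_carrier m hB) I hIB).trans hBA⟩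

def maximalSets (P : Set X → Prop) : Set (Set X) :=
  {I | ∃ m, I ∈ T.level m ∧ P I ∧ ∀ j < m, ∀ J ∈ T.level j, I ⊆ J → ¬ P J}

variable {T} {P : Set X → Prop}

lemma maximalSets_subset_carrier : T.maximalSets P ⊆ T.carrier := by
  rintro I ⟨m, hI, -⟩
  exact T.level_subset_carrier m hI

lemma maximalSets_countable : (T.maximalSets P).Countable :=
  T.carrier_countable.mono maximalSets_subset_carrier

lemma pairwise_aedisjoint_maximalSets : (T.maximalSets P).Pairwise (AEDisjoint μ) := by
  suffices key : ∀ {m m' I J}, m < m' → I ∈ T.level m → P I → J ∈ T.level m' →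
      (∀ j < m', ∀ K ∈ T.level j, J ⊆ K → ¬ P K) → AEDisjoint μ I J by
    rintro I ⟨m, hI, hPI, hImax⟩ J ⟨m', hJ, hPJ, hJmax⟩ hIJ
    rcases lt_trichotomy m m' with h | rfl | h
    · exact key h hI hPI hJ hJmax
    · exact T.pairwise_aedisjoint_level m hI hJ hIJ
    · exact (key h hJ hPJ hI hImax).symm
  intro m m' I J hmm' hI hPI hJ hJmax
  obtain ⟨A, hA, hJA⟩ := T.exists_level_superset hmm'.le hJ
  obtain rfl | hIA := eq_or_ne I A
  · exact absurd hPI (hJmax m hmm' I hA hJA)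
  · exact (T.pairwise_aedisjoint_level m hI hA hIA).mono subset_rfl hJA

lemma exists_maximalSets_superset {I : Set X} (hI : I ∈ T.carrier) (hPI : P I) :
    ∃ J ∈ T.maximalSets P, I ⊆ J := by
  classical
  rw [T.carrier_eq, mem_iUnion] at hI
  have hex : ∃ j, ∃ K ∈ T.level j, I ⊆ K ∧ P K := by
    obtain ⟨m, hm⟩ := hI
    exact ⟨m, I, hm, subset_rfl, hPI⟩
  obtain ⟨K, hK, hIK, hPK⟩ := Nat.find_spec hex
  refine ⟨K, ⟨Nat.find hex, hK, hPK, fun j hj J hJ hKJ hPJ => ?_⟩, hIK⟩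
  exact Nat.find_min hex hj ⟨J, hJ, hIK.trans hKJ, hPJ⟩

end TreeOn

lemma mul_measure_sUnion_le_setLIntegral {X : Type*} [MeasurableSpace X] {μ : Measure X}
    {C : Set (Set X)} (hC : C.Countable) (hmeas : ∀ I ∈ C, MeasurableSet I)
    (hdisj : C.Pairwise (AEDisjoint μ)) {c : ℝ≥0∞} {f : X → ℝ≥0∞}
    (h : ∀ I ∈ C, c * μ I ≤ ∫⁻ x in I, f x ∂μ) :
    c * μ (⋃₀ C) ≤ ∫⁻ x in ⋃₀ C, f x ∂μ := by
  rw [sUnion_eq_biUnion, lintegral_biUnion₀ hC (fun I hI => (hmeas I hI).nullMeasurableSet) hdisj]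
  calc c * μ (⋃ I ∈ C, I) ≤ c * ∑' I : C, μ I := by gcongr; exact measure_biUnion_le μ hC id
    _ = ∑' I : C, c * μ I := ENNReal.tsum_mul_left.symm
    _ ≤ ∑' I : C, ∫⁻ x in I, f x ∂μ := ENNReal.tsum_le_tsum fun I => h I I.2

lemma exists_superset_setOf_lt_maxT {X : Type*} [MeasurableSpace X] {μ : Measure X}
    (T : TreeOn X μ) (φ : X → ℝ) (c : ℝ≥0∞) :
    ∃ S, {x | c < maxT μ T φ x} ⊆ S ∧ c * μ S ≤ ∫⁻ x in S, ENNReal.ofReal |φ x| ∂μ := by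
  set P : Set X → Prop := fun I => c * μ I < ∫⁻ x in I, ENNReal.ofReal |φ x| ∂μ
  refine ⟨⋃₀ T.maximalSets P, fun x hx => ?_, ?_⟩
  · obtain ⟨I, hIT, hxI, hcI⟩ : ∃ I ∈ T.carrier, x ∈ I ∧
        c < (∫⁻ y in I, ENNReal.ofReal |φ y| ∂μ) / μ I := by
      simpa only [mem_ofPred_eq, maxT, lt_iSup_iff, exists_prop] using hx
    obtain ⟨J, hJ, hIJ⟩ :=
      TreeOn.exists_maximalSets_superset hIT (show P I from ENNReal.mul_lt_of_lt_div hcI)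
    exact ⟨J, hJ, hIJ hxI⟩
  · refine mul_measure_sUnion_le_setLIntegral TreeOn.maximalSets_countable
      (fun I hI => T.meas I (TreeOn.maximalSets_subset_carrier hI))
      TreeOn.pairwise_aedisjoint_maximalSets fun I hI => ?_
    obtain ⟨m, -, hPI, -⟩ := hI
    exact hPI.le

lemma weakNormE_maxT_le {X : Type*} [MeasurableSpace X] {μ : Measure X} [IsFiniteMeasure μ]
    (T : TreeOn X μ) {φ : X → ℝ} (hφ : Measurable φ) {p F : ℝ} (hp : 1 < p)
    (h : weakNorm μ p φ ≤ ENNReal.ofReal F) :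
    weakNormE μ p (maxT μ T φ) ≤ ENNReal.ofReal (p / (p - 1) * F) := by
  refine iSup₂_le fun t _ => ?_
  obtain ⟨S, hMS, hS⟩ := exists_superset_setOf_lt_maxT T φ (ENNReal.ofReal t)
  have hφS := setLIntegral_le_of_measure_lt_le (ae_of_all μ fun x => abs_nonneg (φ x))
    hφ.abs.aemeasurable hp (fun t ht => measure_lt_abs_le_of_weakNorm_le (by linarith) h ht)
    (measure_ne_top μ S)
  calc ENNReal.ofReal t * μ {x | ENNReal.ofReal t < maxT μ T φ x} ^ (1 / p)
      ≤ ENNReal.ofReal t * μ S ^ (1 / p) := by gcongr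
    _ ≤ ENNReal.ofReal (p / (p - 1) * F) :=
      ENNReal.mul_rpow_one_div_le_of_mul_le (by linarith) (measure_ne_top μ S) (hS.trans hφS)

theorem stmt13_general {X : Type*} [MeasurableSpace X] (μ : MeasureTheory.Measure X)
    [IsProbabilityMeasure μ] (T : TreeOn X μ)
    (p k : ℝ) (hp : 1 < p) (hk : k = p / (p - 1)) (F : ℝ)
    (φ : X → ℝ) (hφm : Measurable φ)
    (hnorm : weakNorm μ p φ ≤ ENNReal.ofReal F)
    (l : ℝ) (hl : 0 < l) :
    μ {x | ENNReal.ofReal l ≤ maxT μ T φ x} ≤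
      ENNReal.ofReal (k ^ p * F ^ p / l ^ p) := by
  have hp₀ : 0 < p := by linarith
  have hk₀ : 0 ≤ k := hk ▸ div_nonneg hp₀.le (by linarith)
  have hM : weakNormE μ p (maxT μ T φ) ≤ ENNReal.ofReal (k * F) :=
    hk ▸ weakNormE_maxT_le T hφm hp hnorm
  calc μ {x | ENNReal.ofReal l ≤ maxT μ T φ x}
      ≤ (ENNReal.ofReal (k * F) / ENNReal.ofReal l) ^ p :=
        ENNReal.le_div_rpow_of_mul_rpow_le hp₀ (ENNReal.ofReal_pos.2 hl).ne' ENNReal.ofReal_ne_top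
          (mul_measure_setOf_le_rpow_le_of_weakNormE_le hp₀.le hM hl)
    _ ≤ ENNReal.ofReal (k ^ p * F ^ p / l ^ p) := by
        rcases le_or_gt F 0 with hF | hF
        · rw [ENNReal.ofReal_of_nonpos (mul_nonpos_of_nonneg_of_nonpos hk₀ hF), ENNReal.zero_div,
            ENNReal.zero_rpow_of_pos hp₀]
          exact zero_le
        · rw [← ENNReal.ofReal_div_of_pos hl, ENNReal.ofReal_rpow_of_nonneg (by positivity) hp₀.le,
            Real.div_rpow (by positivity) hl.le, Real.mul_rpow hk₀ hF.le]

/-- Upper bound in Theorem 4.1: if `‖φ‖_{p,∞} ≤ F` then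
`μ({M_T φ ≥ λ}) ≤ k^p F^p/λ^p` for every `λ > 0`, where `k = p/(p-1)`. -/
theorem stmt13 {X : Type*} [MeasurableSpace X] (μ : MeasureTheory.Measure X)
    [IsProbabilityMeasure μ] (hna : Nonatomic μ) (T : TreeOn X μ)
    (p k : ℝ) (hp : 1 < p) (hk : k = p / (p - 1)) (F : ℝ)
    (φ : X → ℝ) (hφm : Measurable φ) (hφ0 : ∀ x, 0 ≤ φ x)
    (hnorm : weakNorm μ p φ ≤ ENNReal.ofReal F)
    (l : ℝ) (hl : 0 < l) :
    μ {x | ENNReal.ofReal l ≤ maxT μ T φ x} ≤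
      ENNReal.ofReal (k ^ p * F ^ p / l ^ p) :=
  stmt13_general μ T p k hp hk F φ hφm hnorm l hl
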